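/- For each k ≥ 0, the number of pairs (p, t) where p is a nonnegative Dyck path of length 2k from height 0 to height 0 and t is a single box of the Young diagram of the partition lying above p (inside the staircase triangle), equals the coefficient of x^{2k} in c(c−1)²/(2−c)³ where c = c(x²) is the Catalan generating function. Equivalently, Σ_{π: π_i ≤ k−i} |π| equals [x^{2k}] c(c−1)²/(2−c)³. -/

import Mathlib

/-- `c(x²)` as a one-variable formal power series over `ℚ`, where
`c(t) = Σ_k C_k t^k` is the Catalan generating function. -/
noncomputable def catalanX2 : PowerSeries ℚ :=
  PowerSeries.mk fun k =>
    if k % 2 = 0 then (Nat.choose k (k / 2) : ℚ) / (k / 2 + 1) else 0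

/-- The total number of boxes `Σ_π |π|` over all partitions `π` with at most `k`
parts contained in the staircase `π_i ≤ k − i` (equivalently, the number of pairs
(nonnegative Dyck path of length `2k`, one box of the partition above it), i.e. of
1-rook placements). -/
noncomputable def stairBoxCount (k : ℕ) : ℚ :=
  ∑ᶠ π : {π : Fin k → ℕ //
      (∀ i j, i ≤ j → π j ≤ π i) ∧ ∀ i : Fin k, π i ≤ k - ((i : ℕ) + 1)},
    ((∑ i, (π : Fin k → ℕ) i : ℕ) : ℚ)


/-!
Cutting a staircase partition `π` of size `n + 1` at its first row `d` touching the staircase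
(`π_d = n - d`) leaves a staircase partition of size `d`, raised by `n - d`, above that row, and
one of size `n - d` below it; the raised block and row `d` contribute `(d + 1)(n - d)` boxes.
So these partitions are counted by the Catalan numbers, and the area series `A(t)` satisfies
`A = t (2 A C + (t C)' · t C')`. Differentiating `C = 1 + t C²` shows that `W = 1 - 2 t C`
satisfies `W · (t C)' = 1` and `W · t C' = C - 1`, whence `A W³ = t (C - 1)`; as `2 - C = W C`,
this is `A (2 - C)³ = C (C - 1)²`. Substituting `t = x²` gives the theorem.
-/

open Finset PowerSeries

namespace Staircase

def IsStair {k : ℕ} (π : Fin k → ℕ) : Prop :=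
  (∀ i j, i ≤ j → π j ≤ π i) ∧ ∀ i : Fin k, π i ≤ k - ((i : ℕ) + 1)

open Classical in
noncomputable def stairs (k : ℕ) : Finset (Fin k → ℕ) :=
  {π ∈ Fintype.piFinset fun _ => range k | IsStair π}

theorem mem_stairs {k : ℕ} {π : Fin k → ℕ} : π ∈ stairs k ↔ IsStair π := by
  simp only [stairs, mem_filter, Fintype.mem_piFinset, mem_range, and_iff_right_iff_imp]
  intro h i
  have := h.2 i
  omega

noncomputable def stairArea (k : ℕ) : ℕ := ∑ π ∈ stairs k, ∑ i, π i

section Glue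

variable {n d : ℕ} {α : Fin d → ℕ} {β : Fin (n - d) → ℕ}

def glue (n d : ℕ) (α : Fin d → ℕ) (β : Fin (n - d) → ℕ) (m : ℕ) : ℕ :=
  if h : m < d then α ⟨m, h⟩ + (n - d)
  else if m = d then n - d
  else if h : m - (d + 1) < n - d then β ⟨m - (d + 1), h⟩ else 0

theorem glue_of_lt {m : ℕ} (h : m < d) : glue n d α β m = α ⟨m, h⟩ + (n - d) := by
  simp [glue, h]

theorem glue_self : glue n d α β d = n - d := by
  simp [glue]

theorem glue_of_gt {m : ℕ} (h : d < m) (h' : m - (d + 1) < n - d) :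
    glue n d α β m = β ⟨m - (d + 1), h'⟩ := by
  simp [glue, h', show ¬m < d by omega, show m ≠ d by omega]

theorem isStair_glue (hd : d ≤ n) (hα : IsStair α) (hβ : IsStair β) :
    IsStair fun i : Fin (n + 1) => glue n d α β i := by
  obtain ⟨hα_anti, hα_le⟩ := hα
  obtain ⟨hβ_anti, hβ_le⟩ := hβ
  refine ⟨fun i j hij => ?_, fun i => ?_⟩
  · have hij : (i : ℕ) ≤ j := hij
    dsimp only
    rcases lt_trichotomy (j : ℕ) d with hj | rfl | hj
    · rw [glue_of_lt (hij.trans_lt hj), glue_of_lt hj]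
      have := hα_anti ⟨i, by omega⟩ ⟨j, hj⟩ hij
      omega
    · rcases hij.lt_or_eq with hi | hi
      · rw [glue_of_lt hi, glue_self]
        omega
      · rw [hi]
    · have := hβ_le ⟨j - (d + 1), by omega⟩
      rw [glue_of_gt hj (by omega)]
      rcases lt_trichotomy (i : ℕ) d with hi | rfl | hi
      · rw [glue_of_lt hi]
        omega
      · rw [glue_self]
        omega
      · rw [glue_of_gt hi (by omega)]
        exact hβ_anti _ _ (Fin.mk_le_mk.2 (by omega))
  · dsimp only
    rcases lt_trichotomy (i : ℕ) d with hi | hi | hi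
    · have : α ⟨i, hi⟩ ≤ d - (i + 1) := hα_le ⟨i, hi⟩
      rw [glue_of_lt hi]
      omega
    · rw [hi, glue_self]
      omega
    · have : β ⟨i - (d + 1), _⟩ ≤ n - d - (i - (d + 1) + 1) :=
        hβ_le ⟨i - (d + 1), by omega⟩
      rw [glue_of_gt hi (by omega)]
      omega

theorem glue_injective (hd : d ≤ n) {α' : Fin d → ℕ} {β' : Fin (n - d) → ℕ}
    (h : (fun i : Fin (n + 1) => glue n d α β i) = fun i : Fin (n + 1) => glue n d α' β' i) :
    α = α' ∧ β = β' := by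
  constructor
  · funext i
    simpa [glue_of_lt] using congrFun h ⟨i, by omega⟩
  · funext j
    have := congrFun h ⟨d + 1 + j, by omega⟩
    dsimp only at this
    rwa [glue_of_gt (by omega) (by omega), glue_of_gt (by omega) (by omega),
      show (⟨d + 1 + j - (d + 1), _⟩ : Fin (n - d)) = j by ext; simp] at this

theorem sum_glue (hd : d ≤ n) :
    ∑ i : Fin (n + 1), glue n d α β i = ∑ i, α i + ∑ j, β j + (d + 1) * (n - d) := by
  have hsplit : ∑ m ∈ range (n + 1), glue n d α β m =
      ∑ m ∈ range d, glue n d α β m + ∑ j ∈ range (n - d), glue n d α β (d + (j + 1)) +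
        glue n d α β d := by
    rw [show n + 1 = d + (n - d + 1) by omega, sum_range_add, sum_range_succ', add_zero,
      add_assoc]
  have habove : ∑ m ∈ range d, glue n d α β m = ∑ i, α i + d * (n - d) := by
    rw [sum_range, sum_congr rfl fun i _ => glue_of_lt i.isLt, sum_add_distrib]
    simp
  have hbelow : ∑ j ∈ range (n - d), glue n d α β (d + (j + 1)) = ∑ j, β j := by
    rw [sum_range]
    refine sum_congr rfl fun j _ => ?_
    rw [glue_of_gt (by omega) (by omega)]
    congr 1
    ext
    simp only
    omega
  rw [Fin.sum_univ_eq_sum_range (glue n d α β), hsplit, habove, hbelow, glue_self]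
  ring

end Glue

theorem glue_ne_glue {n d d' : ℕ} (hdd' : d < d') (hd' : d' ≤ n) {α : Fin d → ℕ}
    {β : Fin (n - d) → ℕ} {α' : Fin d' → ℕ} {β' : Fin (n - d') → ℕ}
    (hα' : IsStair α') :
    (fun i : Fin (n + 1) => glue n d α β i) ≠ fun i : Fin (n + 1) => glue n d' α' β' i := by
  intro h
  have hrow := congrFun h ⟨d, by omega⟩
  have := hα'.2 ⟨d, hdd'⟩
  dsimp only at hrow this
  rw [glue_self, glue_of_lt hdd'] at hrow
  omega

theorem exists_glue {n : ℕ} {π : Fin (n + 1) → ℕ} (hπ : IsStair π) :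
    ∃ d ≤ n, ∃ α : Fin d → ℕ, IsStair α ∧ ∃ β : Fin (n - d) → ℕ, IsStair β ∧
      π = fun i : Fin (n + 1) => glue n d α β i := by
  classical
  obtain ⟨hanti, hle⟩ := hπ
  have htouch : ∃ m, ∃ h : m < n + 1, π ⟨m, h⟩ = n - m :=
    ⟨n, n.lt_succ_self, by simpa using hle ⟨n, n.lt_succ_self⟩⟩
  obtain ⟨d, hd, hπd, hfirst⟩ : ∃ d, ∃ hd : d < n + 1, π ⟨d, hd⟩ = n - d ∧
      ∀ m (hm : m < d), π ⟨m, by omega⟩ ≠ n - m :=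
    ⟨_, (Nat.find_spec htouch).1, (Nat.find_spec htouch).2,
      fun m hm h => Nat.find_min htouch hm ⟨_, h⟩⟩
  refine ⟨d, by omega, fun i => π ⟨i, by omega⟩ - (n - d),
    ⟨fun i j hij => ?_, fun i => ?_⟩, fun j => π ⟨d + 1 + j, by omega⟩,
    ⟨fun i j hij => ?_, fun j => ?_⟩, funext fun i => ?_⟩
  · have := hanti ⟨i, by omega⟩ ⟨j, by omega⟩ hij
    dsimp only
    omega
  · have : π ⟨i, _⟩ ≤ n + 1 - (i + 1) := hle ⟨i, by omega⟩
    have := hfirst i i.isLt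
    have := hanti ⟨i, by omega⟩ ⟨d, hd⟩ (Fin.mk_le_mk.2 (by omega))
    dsimp only
    omega
  · exact hanti _ _ (Fin.mk_le_mk.2 (by simp only [Fin.le_def] at hij; omega))
  · have : π ⟨d + 1 + j, _⟩ ≤ n + 1 - (d + 1 + j + 1) := hle ⟨d + 1 + j, by omega⟩
    dsimp only
    omega
  · rcases lt_trichotomy (i : ℕ) d with hi | hi | hi
    · have := hanti i ⟨d, hd⟩ (Fin.mk_le_mk.2 (by omega))
      rw [glue_of_lt hi, Fin.eta]
      omega
    · rw [hi, glue_self, ← hπd]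
      congr 1
      ext
      exact hi
    · rw [glue_of_gt hi (by omega)]
      congr 1
      ext
      simp only
      omega

theorem stairs_succ (n : ℕ) :
    stairs (n + 1) = (range (n + 1)).biUnion fun d =>
      (stairs d ×ˢ stairs (n - d)).image fun p => fun i : Fin (n + 1) => glue n d p.1 p.2 i := by
  ext π
  simp only [mem_biUnion, mem_image, mem_range, mem_product, mem_stairs, Prod.exists]
  constructor
  · intro hπ
    obtain ⟨d, hd, α, hα, β, hβ, rfl⟩ := exists_glue hπ
    exact ⟨d, by omega, α, β, ⟨hα, hβ⟩, rfl⟩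
  · rintro ⟨d, hd, α, β, ⟨hα, hβ⟩, rfl⟩
    exact isStair_glue (by omega) hα hβ

theorem sum_stairs_succ {M : Type*} [AddCommMonoid M] (n : ℕ) (f : (Fin (n + 1) → ℕ) → M) :
    ∑ π ∈ stairs (n + 1), f π = ∑ d ∈ range (n + 1),
      ∑ p ∈ stairs d ×ˢ stairs (n - d), f fun i => glue n d p.1 p.2 i := by
  rw [stairs_succ, sum_biUnion]
  · refine sum_congr rfl fun d hd => sum_image ?_
    rintro ⟨α, β⟩ - ⟨α', β'⟩ - h
    obtain ⟨rfl, rfl⟩ := glue_injective (Nat.le_of_lt_succ (mem_range.1 hd)) h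
    rfl
  · intro d hd d' hd' hne
    simp only [coe_range, Set.mem_Iio] at hd hd'
    refine disjoint_left.2 fun π hπ hπ' => ?_
    simp only [mem_image, mem_product, mem_stairs, Prod.exists] at hπ hπ'
    obtain ⟨α, β, ⟨hα, -⟩, rfl⟩ := hπ
    obtain ⟨α', β', ⟨hα', -⟩, h⟩ := hπ'
    rcases hne.lt_or_gt with hlt | hlt
    · exact glue_ne_glue hlt (by omega) hα' h.symm
    · exact glue_ne_glue hlt (by omega) hα h

theorem card_stairs (k : ℕ) : #(stairs k) = catalan k := by
  induction k using Nat.strong_induction_on with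
  | _ k ih =>
    cases k with
    | zero => simp [stairs, IsStair]
    | succ n =>
      rw [card_eq_sum_ones, sum_stairs_succ, catalan_succ',
        Nat.sum_antidiagonal_eq_sum_range_succ_mk]
      refine sum_congr rfl fun d hd => ?_
      rw [← card_eq_sum_ones, card_product, ih d (mem_range.1 hd), ih (n - d) (by omega)]

theorem stairArea_zero : stairArea 0 = 0 := by
  simp [stairArea]

theorem stairArea_succ (n : ℕ) :
    stairArea (n + 1) = ∑ p ∈ antidiagonal n, (stairArea p.1 * catalan p.2 +
      catalan p.1 * stairArea p.2 + (p.1 + 1) * p.2 * (catalan p.1 * catalan p.2)) := by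
  rw [Nat.sum_antidiagonal_eq_sum_range_succ_mk, stairArea, sum_stairs_succ]
  refine sum_congr rfl fun d hd => ?_
  rw [sum_congr rfl fun p _ => sum_glue (Nat.le_of_lt_succ (mem_range.1 hd)), sum_product]
  simp only [sum_add_distrib, sum_const, smul_eq_mul, ← card_stairs, stairArea, ← mul_sum]
  ring

theorem stairBoxCount_eq_stairArea (k : ℕ) : stairBoxCount k = stairArea k := by
  rw [stairBoxCount,
    finsum_subtype_eq_finsum_cond (f := fun π : Fin k → ℕ => ((∑ i, π i : ℕ) : ℚ))]
  simp_rw [← IsStair.eq_1, ← mem_stairs]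
  rw [finsum_mem_finset_eq_sum, stairArea, Nat.cast_sum]

noncomputable def catalanSeriesRat : ℚ⟦X⟧ := map (Nat.castRingHom ℚ) catalanSeries

noncomputable def areaSeries : ℚ⟦X⟧ := mk fun n => (stairArea n : ℚ)

@[simp]
theorem coeff_catalanSeriesRat (n : ℕ) : coeff n catalanSeriesRat = catalan n := by
  simp [catalanSeriesRat]

theorem constantCoeff_catalanSeriesRat : constantCoeff catalanSeriesRat = 1 := by
  rw [← coeff_zero_eq_constantCoeff_apply, coeff_catalanSeriesRat, catalan_zero, Nat.cast_one]

theorem catalanSeriesRat_eq : catalanSeriesRat = 1 + X * catalanSeriesRat ^ 2 := by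
  have := congrArg (map (Nat.castRingHom ℚ)) catalanSeries_sq_mul_X_add_one
  rw [map_add, map_mul, map_pow, map_X, map_one] at this
  rw [catalanSeriesRat]
  linear_combination -this

theorem areaSeries_eq :
    areaSeries = X * (areaSeries * catalanSeriesRat + catalanSeriesRat * areaSeries +
      d⁄dX ℚ (X * catalanSeriesRat) * (X * d⁄dX ℚ catalanSeriesRat)) := by
  have hD1 (m : ℕ) :
      coeff m (d⁄dX ℚ (X * catalanSeriesRat)) = ((m : ℚ) + 1) * catalan m := by
    rw [coeff_derivative, coeff_succ_X_mul, coeff_catalanSeriesRat, mul_comm]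
  have hD2 (m : ℕ) : coeff m (X * d⁄dX ℚ catalanSeriesRat) = (m : ℚ) * catalan m := by
    cases m with
    | zero => simp
    | succ m =>
      rw [coeff_succ_X_mul, coeff_derivative, coeff_catalanSeriesRat, mul_comm]
      push_cast
      ring
  ext n
  cases n with
  | zero => simp [areaSeries, stairArea_zero]
  | succ n =>
    rw [coeff_succ_X_mul]
    simp only [areaSeries, coeff_mk, map_add, coeff_mul, hD1, hD2, coeff_catalanSeriesRat,
      stairArea_succ, ← sum_add_distrib]
    push_cast
    exact sum_congr rfl fun p _ => by ring

theorem areaSeries_mul_two_sub_pow_three :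
    areaSeries * (2 - catalanSeriesRat) ^ 3 = catalanSeriesRat * (catalanSeriesRat - 1) ^ 2 := by
  set C := catalanSeriesRat
  set A := areaSeries
  have hC : C = 1 + X * C ^ 2 := catalanSeriesRat_eq
  have hC' : d⁄dX ℚ C = C ^ 2 + 2 * X * C * d⁄dX ℚ C := by
    conv_lhs => rw [hC]
    simp [Derivation.leibniz, Derivation.leibniz_pow]
    ring
  have hXC : d⁄dX ℚ (X * C) = C + X * d⁄dX ℚ C := by
    simp [Derivation.leibniz]
    ring
  set W : ℚ⟦X⟧ := 1 - 2 * X * C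
  have hW_XC : W * d⁄dX ℚ (X * C) = 1 := by
    rw [hXC]
    linear_combination hC + X * hC'
  have hW_C' : W * (X * d⁄dX ℚ C) = C - 1 := by
    linear_combination X * hC' - hC
  have hAW : A * W = X * d⁄dX ℚ (X * C) * (X * d⁄dX ℚ C) := by
    linear_combination areaSeries_eq
  calc A * (2 - C) ^ 3 = A * W * W ^ 2 * C ^ 3 := by
        rw [show 2 - C = W * C by linear_combination -2 * hC]
        ring
    _ = X * (W * d⁄dX ℚ (X * C)) * (W * (X * d⁄dX ℚ C)) * C ^ 3 := by rw [hAW]; ring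
    _ = X * (C - 1) * C ^ 3 := by rw [hW_XC, hW_C']; ring
    _ = C * (C - 1) ^ 2 := by linear_combination -(C * (C - 1)) * hC

theorem expand_catalanSeriesRat : expand 2 two_ne_zero catalanSeriesRat = catalanX2 := by
  ext n
  rw [coeff_expand, catalanX2, coeff_mk]
  split_ifs with hn hn' hn'
  · obtain ⟨m, rfl⟩ := hn
    have := succ_mul_catalan_eq_centralBinom m
    rw [Nat.centralBinom_eq_two_mul_choose] at this
    rw [Nat.mul_div_cancel_left m two_pos, coeff_catalanSeriesRat, ← this]
    push_cast
    field_simp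
  · omega
  · omega
  · rfl

theorem expand_areaSeries : expand 2 two_ne_zero areaSeries =
    catalanX2 * (catalanX2 - 1) ^ 2 * (2 - catalanX2)⁻¹ ^ 3 := by
  have h := congrArg (expand 2 two_ne_zero) areaSeries_mul_two_sub_pow_three
  simp only [map_mul, map_pow, map_sub, map_ofNat, map_one, expand_catalanSeriesRat] at h
  have hinv : (2 - catalanX2) * (2 - catalanX2)⁻¹ = 1 := by
    refine PowerSeries.mul_inv_cancel _ ?_
    rw [← expand_catalanSeriesRat, map_sub, constantCoeff_expand, constantCoeff_catalanSeriesRat,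
      map_ofNat]
    norm_num
  set w := 2 - catalanX2
  set u := w⁻¹
  linear_combination
    u ^ 3 * h - expand 2 two_ne_zero areaSeries * (w ^ 2 * u ^ 2 + w * u + 1) * hinv

end Staircase

/-- For each `k`, `Σ_{π ⊆ staircase(k)} |π|` equals the coefficient of `x^{2k}` in
`c(c−1)²/(2−c)³` with `c = c(x²)`. -/
theorem stairBoxCount_eq_coeff (k : ℕ) :
    stairBoxCount k =
      PowerSeries.coeff (R := ℚ) (2 * k)
        (catalanX2 * (catalanX2 - 1) ^ 2 * ((2 - catalanX2)⁻¹) ^ 3) := by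
  rw [← Staircase.expand_areaSeries, coeff_expand_mul, Staircase.areaSeries, coeff_mk,
    Staircase.stairBoxCount_eq_stairArea]
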